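/- arXiv:1502.05573 — 2 statements merged into one kernel-verified Lean document; each statement's English description precedes it below -/
import Mathlib

section
/- Let R : ℕ → ℝ with R(n) ≥ 1 and let t ∈ [0,∞)^ℕ. For each fixed k ∈ ℕ, the set { t' ∈ [0,∞)^ℕ : ∀ n ≥ k, exp(tₙ') ≤ R(n)·exp(tₙ) } is closed and nowhere dense in [0,∞)^ℕ. -/
open Filter Function Set Topology

/-!
Each constraint `exp (t' n) ≤ R n * exp (t n)` is closed and bounds the `n`-th coordinate from
above. A neighbourhood in the product topology constrains only finitely many coordinates, so it
contains points with arbitrarily large `n`-th coordinate for some `n ≥ k`; hence the set has empty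
interior.
-/

theorem eventually_eval_image_eq_univ_of_mem_nhds {ι : Type*} {X : ι → Type*}
    [∀ i, TopologicalSpace (X i)] {S : Set (∀ i, X i)} {x : ∀ i, X i} (hS : S ∈ 𝓝 x) :
    ∀ᶠ i in cofinite, eval i '' S = univ := by
  classical
  rw [nhds_pi, Filter.mem_pi] at hS
  obtain ⟨I, hI, U, hU, hIS⟩ := hS
  refine hI.eventually_cofinite_notMem.mono fun i hi => eq_univ_of_forall fun c => ?_
  refine ⟨update x i c, hIS fun j hj => ?_, update_self i c x⟩
  rw [update_of_ne (ne_of_mem_of_not_mem hj hi)]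
  exact mem_of_mem_nhds (hU j)

theorem interior_eq_empty_of_frequently_bddAbove_eval_image {ι : Type*} {X : ι → Type*}
    [∀ i, TopologicalSpace (X i)] [∀ i, Preorder (X i)] [∀ i, NoMaxOrder (X i)]
    {S : Set (∀ i, X i)} (hS : ∃ᶠ i in cofinite, BddAbove (eval i '' S)) :
    interior S = ∅ := by
  refine eq_empty_of_forall_notMem fun x hx => ?_
  obtain ⟨i, hbdd, huniv⟩ := (hS.and_eventually
    (eventually_eval_image_eq_univ_of_mem_nhds (mem_interior_iff_mem_nhds.mp hx))).exists
  exact not_bddAbove_univ (huniv ▸ hbdd)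

theorem stmt4_general (R : ℕ → ℝ) (t : ℕ → NNReal) (k : ℕ) :
    IsClosed {t' : ℕ → NNReal | ∀ n ≥ k, Real.exp (t' n) ≤ R n * Real.exp (t n)} ∧
    IsNowhereDense {t' : ℕ → NNReal | ∀ n ≥ k, Real.exp (t' n) ≤ R n * Real.exp (t n)} := by
  set S := {t' : ℕ → NNReal | ∀ n ≥ k, Real.exp (t' n) ≤ R n * Real.exp (t n)}
  have hclosed : IsClosed S := by
    simp only [S, ofPred_forall]
    exact isClosed_iInter fun n => isClosed_iInter fun _ =>
      isClosed_le (by fun_prop) continuous_const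
  refine ⟨hclosed, hclosed.isNowhereDense_iff.2 <|
    interior_eq_empty_of_frequently_bddAbove_eval_image ?_⟩
  have hk : ∀ᶠ n in cofinite, k ≤ n := Nat.cofinite_eq_atTop ▸ eventually_ge_atTop k
  refine hk.frequently.mono fun n hn => ⟨(R n * Real.exp (t n)).toNNReal, ?_⟩
  rintro _ ⟨t', ht', rfl⟩
  exact NNReal.le_toNNReal_of_coe_le <| by
    linarith [Real.add_one_le_exp (t' n : ℝ), ht' n hn]

/-- For `R : ℕ → ℝ` with `R n ≥ 1`, `t ∈ [0,∞)^ℕ` and fixed `k`, the set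
`{ t' : ∀ n ≥ k, exp (t' n) ≤ R n * exp (t n) }` is closed and nowhere dense in `[0,∞)^ℕ`. -/
theorem stmt4 (R : ℕ → ℝ) (hR : ∀ n, 1 ≤ R n) (t : ℕ → NNReal) (k : ℕ) :
    IsClosed {t' : ℕ → NNReal | ∀ n ≥ k, Real.exp (t' n) ≤ R n * Real.exp (t n)} ∧
    IsNowhereDense {t' : ℕ → NNReal | ∀ n ≥ k, Real.exp (t' n) ≤ R n * Real.exp (t n)} :=
  stmt4_general R t k
end

section
/- Let t ∈ [0,∞)^ℕ, let R : ℕ → ℝ with R(n) ≥ 1, and let C ⊆ [0,∞)^ℕ be nonmeager. Then there exists t' ∈ C such that exp(tₙ') > R(n)·exp(tₙ) for infinitely many n ∈ ℕ. -/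
/-! For each `n` the condition `exp (t' n) ≤ R n * exp (t n)` cuts out a closed proper
subset of `[0,∞)`. A point of a product lying eventually (along the cofinite filter) in proper
closed subsets `s i` of the factors lies in one of countably many sets `(↑F)ᶜ.pi s`, `F` finite;
each of them is closed with empty interior, since a basic open set constrains only finitely many
coordinates and a free coordinate can be moved out of its `s i`. So those points form a meagre
set, which a nonmeagre `C` cannot be contained in. -/

open Filter Set

section ProductMeagre

variable {ι : Type*} {X : ι → Type*} [∀ i, TopologicalSpace (X i)] {s : ∀ i, Set (X i)}

theorem interior_pi_eq_empty_of_infinite {J : Set ι} (hJ : J.Infinite)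
    (hs : ∀ i ∈ J, s i ≠ univ) : interior (J.pi s) = ∅ := by
  classical
  refine eq_empty_iff_forall_notMem.mpr fun f hf => ?_
  rw [mem_interior_iff_mem_nhds, nhds_pi, Filter.mem_pi] at hf
  obtain ⟨I, hI, V, hV, hVs⟩ := hf
  obtain ⟨i, hiJ, hiI⟩ := (hJ.sdiff hI).nonempty
  obtain ⟨x, hx⟩ := (ne_univ_iff_exists_notMem _).mp (hs i hiJ)
  have hupdate : Function.update f i x ∈ I.pi V := fun j hj => by
    rw [Function.update_of_ne (ne_of_mem_of_not_mem hj hiI)]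
    exact mem_of_mem_nhds (hV j)
  exact hx (by simpa using hVs hupdate i hiJ)

theorem isNowhereDense_pi_of_infinite {J : Set ι} (hJ : J.Infinite)
    (hs_closed : ∀ i, IsClosed (s i)) (hs : ∀ i ∈ J, s i ≠ univ) :
    IsNowhereDense (J.pi s) :=
  (isClosed_set_pi fun i _ => hs_closed i).isNowhereDense_iff.mpr
    (interior_pi_eq_empty_of_infinite hJ hs)

theorem isMeagre_setOf_eventually_mem [Countable ι] [Infinite ι]
    (hs_closed : ∀ i, IsClosed (s i)) (hs : ∀ i, s i ≠ univ) :
    IsMeagre {f : ∀ i, X i | ∀ᶠ i in cofinite, f i ∈ s i} := by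
  have hcover : {f : ∀ i, X i | ∀ᶠ i in cofinite, f i ∈ s i} ⊆
      ⋃ F : Finset ι, (↑F : Set ι)ᶜ.pi s := by
    intro f hf
    obtain ⟨F, hF⟩ := (eventually_cofinite.mp hf).exists_finset
    exact mem_iUnion.mpr ⟨F, fun i hi => by_contra fun h => hi ((hF i).mpr h)⟩
  refine IsMeagre.mono hcover (isMeagre_iUnion fun F => ?_)
  exact (isNowhereDense_pi_of_infinite F.finite_toSet.infinite_compl hs_closed
    fun i _ => hs i).isMeagre

theorem exists_mem_setOf_infinite_notMem_of_not_isMeagre [Countable ι] [Infinite ι]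
    (hs_closed : ∀ i, IsClosed (s i)) (hs : ∀ i, s i ≠ univ) {C : Set (∀ i, X i)}
    (hC : ¬IsMeagre C) : ∃ f ∈ C, {i | f i ∉ s i}.Infinite := by
  by_contra! h
  exact hC ((isMeagre_setOf_eventually_mem hs_closed hs).mono fun f hf =>
    eventually_cofinite.mpr (h f hf))

end ProductMeagre

theorem NNReal.exists_lt_exp (a : ℝ) : ∃ x : NNReal, a < Real.exp x :=
  ((Real.tendsto_exp_atTop.comp (NNReal.tendsto_coe_atTop.mpr tendsto_id)).eventually_gt_atTop
    a).exists

theorem stmt6_general (t : ℕ → NNReal) (R : ℕ → ℝ)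
    (C : Set (ℕ → NNReal)) (hC : ¬ IsMeagre C) :
    ∃ t' ∈ C, {n : ℕ | R n * Real.exp (t n) < Real.exp (t' n)}.Infinite := by
  set s : ℕ → Set NNReal := fun n => {x | Real.exp x ≤ R n * Real.exp (t n)}
  have hs_closed : ∀ n, IsClosed (s n) := fun n =>
    isClosed_le (Real.continuous_exp.comp NNReal.continuous_coe) continuous_const
  have hs : ∀ n, s n ≠ univ := fun n => by
    obtain ⟨x, hx⟩ := NNReal.exists_lt_exp (R n * Real.exp (t n))
    exact (ne_univ_iff_exists_notMem _).mpr ⟨x, not_le.mpr hx⟩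
  simpa [s] using exists_mem_setOf_infinite_notMem_of_not_isMeagre hs_closed hs hC

/-- For `t ∈ [0,∞)^ℕ`, `R : ℕ → ℝ` with `R n ≥ 1`, and a nonmeager set
`C ⊆ [0,∞)^ℕ`, there exists `t' ∈ C` with `exp (t' n) > R n * exp (t n)` for infinitely
many `n`. -/
theorem stmt6 (t : ℕ → NNReal) (R : ℕ → ℝ) (hR : ∀ n, 1 ≤ R n)
    (C : Set (ℕ → NNReal)) (hC : ¬ IsMeagre C) :
    ∃ t' ∈ C, {n : ℕ | R n * Real.exp (t n) < Real.exp (t' n)}.Infinite :=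
  stmt6_general t R C hC
end
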